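/- arXiv:1411.4984 — 4 statements merged into one kernel-verified Lean document; each statement's English description precedes it below -/
import Mathlib

section
/- The generalized Sugeno integral satisfies I_S(μ, f+a) ≤ I_S(μ, f) + a for all a ∈ [0,1], all capacities μ, and all measurable f : X → [0,1] with f + a ∈ [0,1], if and only if the semicopula S satisfies S(c+a, b) ≤ S(c, b) + a for all a, b, c ∈ [0,1] with a + c ≤ 1. -/
/-!
Shifting `f` by `a` shifts every level set `{t ≤ f + a}` to `{t - a ≤ f}`, so the semicopula
inequality applied level by level gives the integral inequality; levels `t ≤ a` contribute at most
`S t 1 = t ≤ a`. Conversely, on a two-point space carrying a capacity with `μ {true} = b`, the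
integral of `c · 1_{true}` is `S c b` while that of its shift by `a` is at least `S (c + a) b`.
-/

open Set

def Semicopula (S : ℝ → ℝ → ℝ) : Prop :=
  (∀ x ∈ Icc (0:ℝ) 1, ∀ y ∈ Icc (0:ℝ) 1, S x y ∈ Icc (0:ℝ) 1) ∧
  (∀ x ∈ Icc (0:ℝ) 1, ∀ y ∈ Icc (0:ℝ) 1, ∀ y' ∈ Icc (0:ℝ) 1, y ≤ y' → S x y ≤ S x y') ∧
  (∀ y ∈ Icc (0:ℝ) 1, ∀ x ∈ Icc (0:ℝ) 1, ∀ x' ∈ Icc (0:ℝ) 1, x ≤ x' → S x y ≤ S x' y) ∧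
  (∀ x ∈ Icc (0:ℝ) 1, S x 1 = x ∧ S 1 x = x)

def Capacity {X : Type} (μ : Set X → ℝ) : Prop :=
  (∀ A : Set X, μ A ∈ Icc (0:ℝ) 1) ∧ (∀ A B : Set X, A ⊆ B → μ A ≤ μ B) ∧
  μ (∅ : Set X) = 0 ∧ μ (univ : Set X) = 1

noncomputable def genInt {X : Type} (S : ℝ → ℝ → ℝ) (μ : Set X → ℝ) (f : X → ℝ) : ℝ :=
  ⨆ t : Icc (0:ℝ) 1, S (t:ℝ) (μ {x | (t:ℝ) ≤ f x})

def Comonotone {X : Type} (f g : X → ℝ) : Prop :=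
  ∀ x y, 0 ≤ (f x - f y) * (g x - g y)

def Tcoseminorm (op : ℝ → ℝ → ℝ) : Prop :=
  ∃ S : ℝ → ℝ → ℝ, Semicopula S ∧
    ∀ x ∈ Icc (0:ℝ) 1, ∀ y ∈ Icc (0:ℝ) 1, op x y = 1 - S (1 - x) (1 - y)

namespace Semicopula

variable {S : ℝ → ℝ → ℝ} {x y x' y' : ℝ}

theorem mem_Icc (hS : Semicopula S) (hx : x ∈ Icc (0:ℝ) 1) (hy : y ∈ Icc (0:ℝ) 1) :
    S x y ∈ Icc (0:ℝ) 1 :=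
  hS.1 x hx y hy

theorem mono_left (hS : Semicopula S) (hy : y ∈ Icc (0:ℝ) 1) (hx : x ∈ Icc (0:ℝ) 1)
    (hx' : x' ∈ Icc (0:ℝ) 1) (h : x ≤ x') : S x y ≤ S x' y :=
  hS.2.2.1 y hy x hx x' hx' h

theorem mono_right (hS : Semicopula S) (hx : x ∈ Icc (0:ℝ) 1) (hy : y ∈ Icc (0:ℝ) 1)
    (hy' : y' ∈ Icc (0:ℝ) 1) (h : y ≤ y') : S x y ≤ S x y' :=
  hS.2.1 x hx y hy y' hy' h

theorem apply_one_right (hS : Semicopula S) (hx : x ∈ Icc (0:ℝ) 1) : S x 1 = x :=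
  (hS.2.2.2 x hx).1

theorem apply_one_left (hS : Semicopula S) (hx : x ∈ Icc (0:ℝ) 1) : S 1 x = x :=
  (hS.2.2.2 x hx).2

theorem apply_zero_left (hS : Semicopula S) (hy : y ∈ Icc (0:ℝ) 1) : S 0 y = 0 := by
  have h0 : (0:ℝ) ∈ Icc (0:ℝ) 1 := left_mem_Icc.2 zero_le_one
  refine le_antisymm ?_ (hS.mem_Icc h0 hy).1
  calc S 0 y ≤ S 0 1 := hS.mono_right h0 hy (right_mem_Icc.2 zero_le_one) hy.2
    _ = 0 := hS.apply_one_right h0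

theorem apply_zero_right (hS : Semicopula S) (hx : x ∈ Icc (0:ℝ) 1) : S x 0 = 0 := by
  have h0 : (0:ℝ) ∈ Icc (0:ℝ) 1 := left_mem_Icc.2 zero_le_one
  refine le_antisymm ?_ (hS.mem_Icc hx h0).1
  calc S x 0 ≤ S 1 0 := hS.mono_left h0 hx (right_mem_Icc.2 zero_le_one) hx.2
    _ = 0 := hS.apply_one_left h0

end Semicopula

namespace Capacity

variable {X : Type} {μ : Set X → ℝ}

theorem mem_Icc (hμ : Capacity μ) (A : Set X) : μ A ∈ Icc (0:ℝ) 1 := hμ.1 A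

theorem mono (hμ : Capacity μ) {A B : Set X} (h : A ⊆ B) : μ A ≤ μ B := hμ.2.1 A B h

theorem empty (hμ : Capacity μ) : μ ∅ = 0 := hμ.2.2.1

end Capacity

section GenInt

variable {X : Type} {S : ℝ → ℝ → ℝ} {μ : Set X → ℝ}

theorem le_genInt (hS : Semicopula S) (hμ : Capacity μ) (f : X → ℝ) {t : ℝ}
    (ht : t ∈ Icc (0:ℝ) 1) : S t (μ {x | t ≤ f x}) ≤ genInt S μ f := by
  have hbdd : BddAbove (range fun s : Icc (0:ℝ) 1 => S s (μ {x | (s:ℝ) ≤ f x})) :=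
    ⟨1, by rintro _ ⟨s, rfl⟩; exact (hS.mem_Icc s.2 (hμ.mem_Icc _)).2⟩
  exact le_ciSup hbdd ⟨t, ht⟩

theorem genInt_nonneg (hS : Semicopula S) (hμ : Capacity μ) (f : X → ℝ) : 0 ≤ genInt S μ f :=
  have h0 : (0:ℝ) ∈ Icc (0:ℝ) 1 := left_mem_Icc.2 zero_le_one
  (hS.mem_Icc h0 (hμ.mem_Icc _)).1.trans (le_genInt hS hμ f h0)

theorem genInt_indicator (hS : Semicopula S) (hμ : Capacity μ) (A : Set X) {c : ℝ}
    (hc : c ∈ Icc (0:ℝ) 1) : genInt S μ (A.indicator fun _ => c) = S c (μ A) := by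
  refine le_antisymm ?_ ?_
  · have : Nonempty (Icc (0:ℝ) 1) := ⟨⟨0, left_mem_Icc.2 zero_le_one⟩⟩
    refine ciSup_le fun ⟨t, ht⟩ => ?_
    have hScA : 0 ≤ S c (μ A) := (hS.mem_Icc hc (hμ.mem_Icc A)).1
    rcases ht.1.eq_or_lt with rfl | ht0
    · rw [hS.apply_zero_left (hμ.mem_Icc _)]
      exact hScA
    have hlevel_sub : {x | t ≤ A.indicator (fun _ => c) x} ⊆ A := fun x hx => by
      by_contra hxA
      simp only [mem_ofPred_eq, indicator_of_notMem hxA] at hx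
      linarith
    rcases le_or_gt t c with htc | hct
    · calc S t (μ {x | t ≤ A.indicator (fun _ => c) x}) ≤ S t (μ A) :=
            hS.mono_right ht (hμ.mem_Icc _) (hμ.mem_Icc A) (hμ.mono hlevel_sub)
        _ ≤ S c (μ A) := hS.mono_left (hμ.mem_Icc A) ht hc htc
    · have hlevel_empty : {x | t ≤ A.indicator (fun _ => c) x} = ∅ :=
        eq_empty_of_forall_notMem fun x hx => by
          simp only [mem_ofPred_eq, indicator_of_mem (hlevel_sub hx)] at hx
          linarith
      rw [hlevel_empty, hμ.empty, hS.apply_zero_right ht]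
      exact hScA
  · calc S c (μ A) ≤ S c (μ {x | c ≤ A.indicator (fun _ => c) x}) :=
          hS.mono_right hc (hμ.mem_Icc A) (hμ.mem_Icc _) (hμ.mono fun x hx =>
            (indicator_of_mem hx (fun _ => c)).ge)
      _ ≤ _ := le_genInt hS hμ _ hc

theorem apply_add_le_genInt_indicator_add (hS : Semicopula S) (hμ : Capacity μ) (A : Set X)
    {a c : ℝ} (hca : c + a ∈ Icc (0:ℝ) 1) :
    S (c + a) (μ A) ≤ genInt S μ (fun x => A.indicator (fun _ => c) x + a) :=
  calc S (c + a) (μ A) ≤ S (c + a) (μ {x | c + a ≤ A.indicator (fun _ => c) x + a}) :=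
        hS.mono_right hca (hμ.mem_Icc A) (hμ.mem_Icc _) <| hμ.mono fun x hx => by
          simp only [mem_ofPred_eq, indicator_of_mem hx, le_refl]
    _ ≤ _ := le_genInt hS hμ _ hca

theorem genInt_add_const_le (hS : Semicopula S) (hμ : Capacity μ)
    (hshift : ∀ a ∈ Icc (0:ℝ) 1, ∀ b ∈ Icc (0:ℝ) 1, ∀ c ∈ Icc (0:ℝ) 1, a + c ≤ 1 →
      S (c + a) b ≤ S c b + a)
    (f : X → ℝ) {a : ℝ} (ha : a ∈ Icc (0:ℝ) 1) :
    genInt S μ (fun x => f x + a) ≤ genInt S μ f + a := by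
  have : Nonempty (Icc (0:ℝ) 1) := ⟨⟨0, left_mem_Icc.2 zero_le_one⟩⟩
  refine ciSup_le fun ⟨t, ht⟩ => ?_
  rcases le_or_gt t a with hta | hat
  · calc S t (μ {x | t ≤ f x + a})
        ≤ S t 1 := hS.mono_right ht (hμ.mem_Icc _) (right_mem_Icc.2 zero_le_one) (hμ.mem_Icc _).2
      _ = t := hS.apply_one_right ht
      _ ≤ genInt S μ f + a := by linarith [genInt_nonneg hS hμ f]
  · have hc : t - a ∈ Icc (0:ℝ) 1 := ⟨by linarith, by linarith [ht.2, ha.1]⟩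
    have hlevel : {x | t ≤ f x + a} = {x | t - a ≤ f x} := by
      ext x
      simp only [mem_ofPred_eq]
      constructor <;> intro h <;> linarith
    calc S t (μ {x | t ≤ f x + a}) = S (t - a + a) (μ {x | t - a ≤ f x}) := by
          rw [hlevel, sub_add_cancel]
      _ ≤ S (t - a) (μ {x | t - a ≤ f x}) + a :=
          hshift a ha _ (hμ.mem_Icc _) _ hc (by linarith [ht.2])
      _ ≤ genInt S μ f + a := by linarith [le_genInt hS hμ f hc]

end GenInt

theorem indicator_const_add_mem_Icc {X : Type} (A : Set X) {a c : ℝ} (ha : 0 ≤ a)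
    (hc : 0 ≤ c) (hac : a + c ≤ 1) (x : X) : A.indicator (fun _ => c) x + a ∈ Icc (0:ℝ) 1 := by
  by_cases hx : x ∈ A
  · rw [indicator_of_mem hx]
    constructor <;> linarith
  · rw [indicator_of_notMem hx]
    constructor <;> linarith

noncomputable def boolCapacity (b : ℝ) (s : Set Bool) : ℝ :=
  open Classical in if true ∈ s then if false ∈ s then 1 else b else 0

theorem boolCapacity_true {b : ℝ} : boolCapacity b {true} = b := by
  simp [boolCapacity]

theorem capacity_boolCapacity {b : ℝ} (hb : b ∈ Icc (0:ℝ) 1) : Capacity (boolCapacity b) := by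
  have hmem : ∀ s, boolCapacity b s ∈ Icc (0:ℝ) 1 := fun s => by
    unfold boolCapacity
    split_ifs
    exacts [right_mem_Icc.2 zero_le_one, hb, left_mem_Icc.2 zero_le_one]
  refine ⟨hmem, fun s t hst => ?_, by simp [boolCapacity], by simp [boolCapacity]⟩
  by_cases hts : true ∈ s
  · by_cases hfs : false ∈ s
    · simp [boolCapacity, hts, hfs, hst hts, hst hfs]
    · by_cases hft : false ∈ t <;> simp [boolCapacity, hts, hfs, hst hts, hft, hb.2]
  · simpa [boolCapacity, hts] using (hmem t).1

theorem stmt0 (S : ℝ → ℝ → ℝ) (hS : Semicopula S) :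
    (∀ (X : Type) (μ : Set X → ℝ), Capacity μ → ∀ f : X → ℝ,
        (∀ x, f x ∈ Icc (0:ℝ) 1) → ∀ a ∈ Icc (0:ℝ) 1,
        (∀ x, f x + a ∈ Icc (0:ℝ) 1) →
        genInt S μ (fun x => f x + a) ≤ genInt S μ f + a) ↔
    (∀ a ∈ Icc (0:ℝ) 1, ∀ b ∈ Icc (0:ℝ) 1, ∀ c ∈ Icc (0:ℝ) 1, a + c ≤ 1 →
        S (c + a) b ≤ S c b + a) := by
  refine ⟨fun H a ha b hb c hc hac => ?_,
    fun H X μ hμ f _ a ha _ => genInt_add_const_le hS hμ H f ha⟩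
  have hμ := capacity_boolCapacity hb
  set f : Bool → ℝ := ({true} : Set Bool).indicator fun _ => c
  have hf : ∀ x, f x ∈ Icc (0:ℝ) 1 := fun x => by
    simpa only [add_zero] using indicator_const_add_mem_Icc _ le_rfl hc.1 (by linarith [hc.2]) x
  have hca : c + a ∈ Icc (0:ℝ) 1 := ⟨by linarith [ha.1, hc.1], by linarith⟩
  calc S (c + a) b = S (c + a) (boolCapacity b {true}) := by rw [boolCapacity_true]
    _ ≤ genInt S (boolCapacity b) (fun x => f x + a) :=
        apply_add_le_genInt_indicator_add hS hμ _ hca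
    _ ≤ genInt S (boolCapacity b) f + a :=
        H Bool _ hμ f hf a ha (indicator_const_add_mem_Icc _ ha.1 hc.1 hac)
    _ = S c b + a := by rw [genInt_indicator hS hμ _ hc, boolCapacity_true]
end

section
/- For any semicopula S, any capacity μ, and any comonotone measurable functions f, g : X → [0,1], the generalized Sugeno integral satisfies I_S(μ, max(f, g)) = max(I_S(μ, f), I_S(μ, g)). -/
open Set

/-! Comonotonicity makes the superlevel sets `{f ≥ t}` and `{g ≥ t}` nested, so `{max f g ≥ t}` is
the larger of the two. Monotonicity of `μ` and of `S` in its second argument then turns the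
integrand of `max f g` into the pointwise maximum of the integrands of `f` and `g`, and a supremum
of pointwise maxima is the maximum of the suprema. -/

theorem Comonotone.superlevel_subset_or {X : Type} {f g : X → ℝ} (hfg : Comonotone f g)
    (t : ℝ) : {x | t ≤ f x} ⊆ {x | t ≤ g x} ∨ {x | t ≤ g x} ⊆ {x | t ≤ f x} := by
  by_contra! h
  obtain ⟨⟨a, hfa, hga⟩, ⟨b, hgb, hfb⟩⟩ := And.imp not_subset.mp not_subset.mp h
  simp only [mem_ofPred_eq, not_le] at hfa hga hgb hfb
  nlinarith [hfg a b]

theorem Monotone.map_union_of_subset_or {X α : Type*} [LinearOrder α] {μ : Set X → α}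
    (hμ : Monotone μ) {A B : Set X} (h : A ⊆ B ∨ B ⊆ A) : μ (A ∪ B) = max (μ A) (μ B) := by
  rcases h with h | h
  · rw [union_eq_right.2 h, max_eq_right (hμ h)]
  · rw [union_eq_left.2 h, max_eq_left (hμ h)]

theorem Capacity.monotone {X : Type} {μ : Set X → ℝ} (hμ : Capacity μ) : Monotone μ :=
  fun A B h => hμ.2.1 A B h

theorem Semicopula.monotoneOn_right {S : ℝ → ℝ → ℝ} (hS : Semicopula S) {t : ℝ}
    (ht : t ∈ Icc (0:ℝ) 1) : MonotoneOn (S t) (Icc 0 1) :=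
  fun _ ha _ hb h => hS.2.1 t ht _ ha _ hb h

theorem setOf_le_max {X : Type*} (f g : X → ℝ) (t : ℝ) :
    {x | t ≤ max (f x) (g x)} = {x | t ≤ f x} ∪ {x | t ≤ g x} := by
  ext
  simp only [mem_union, mem_ofPred_eq, le_max_iff]

theorem Comonotone.semicopula_measure_superlevel_max {X : Type} {S : ℝ → ℝ → ℝ}
    (hS : Semicopula S) {μ : Set X → ℝ} (hμ : Capacity μ) {f g : X → ℝ}
    (hfg : Comonotone f g) {t : ℝ} (ht : t ∈ Icc (0:ℝ) 1) :
    S t (μ {x | t ≤ max (f x) (g x)}) = max (S t (μ {x | t ≤ f x})) (S t (μ {x | t ≤ g x})) := by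
  rw [setOf_le_max, hμ.monotone.map_union_of_subset_or (hfg.superlevel_subset_or t)]
  exact (hS.monotoneOn_right ht).map_max (hμ.1 _) (hμ.1 _)

theorem bddAbove_range_genInt {X : Type} {S : ℝ → ℝ → ℝ} (hS : Semicopula S)
    {μ : Set X → ℝ} (hμ : Capacity μ) (f : X → ℝ) :
    BddAbove (range fun t : Icc (0:ℝ) 1 => S t (μ {x | (t:ℝ) ≤ f x})) :=
  ⟨1, by rintro _ ⟨t, rfl⟩; exact (hS.1 t t.2 _ (hμ.1 _)).2⟩

theorem stmt6_general {X : Type} (S : ℝ → ℝ → ℝ) (hS : Semicopula S)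
    (μ : Set X → ℝ) (hμ : Capacity μ) (f g : X → ℝ)
    (hfg : Comonotone f g) :
    genInt S μ (fun x => max (f x) (g x)) = max (genInt S μ f) (genInt S μ g) := by
  rw [genInt, genInt, genInt, ← ciSup_sup_eq (bddAbove_range_genInt hS hμ f)
    (bddAbove_range_genInt hS hμ g)]
  exact iSup_congr fun t => hfg.semicopula_measure_superlevel_max hS hμ t.2

theorem stmt6 {X : Type} (S : ℝ → ℝ → ℝ) (hS : Semicopula S)
    (μ : Set X → ℝ) (hμ : Capacity μ) (f g : X → ℝ)
    (hf : ∀ x, f x ∈ Icc (0:ℝ) 1) (hg : ∀ x, g x ∈ Icc (0:ℝ) 1)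
    (hfg : Comonotone f g) :
    genInt S μ (fun x => max (f x) (g x)) = max (genInt S μ f) (genInt S μ g) :=
  stmt6_general S hS μ hμ f g hfg
end

section
/- There exist a capacity μ on a two-point space X = {a, b} and comonotone functions f, g : X → [0,1] such that the Shilkret integral satisfies I_Π(μ, min(f,g)) < min(I_Π(μ, f), I_Π(μ, g)). Concretely, with μ({a}) = 0.5, μ({b}) = β for any β ∈ [0,1], μ(X) = 1, f(a) = 1, f(b) = 0.4, g(a) = 0.8, g(b) = 0.6, one has I_Π(μ, f) = 0.5, I_Π(μ, g) = 0.6, and I_Π(μ, min(f,g)) = 0.4. -/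
open Set

/-! On `Bool`, a nondecreasing `f` has Shilkret integral `max (f false) (f true * μ {true})`.
For `f = (0.4, 1)` this is `1 * μ {true} = 0.5`, for `g = (0.6, 0.8)` it is `g false = 0.6`, while
`min f g = (0.4, 0.8)` keeps the smaller value of `f` at `false` and the smaller value of `g` at
`true`, so it reaches neither and its integral is `0.4`. -/

lemma Bool.set_eq_cases (A : Set Bool) : A = ∅ ∨ A = {true} ∨ A = {false} ∨ A = univ := by
  by_cases ht : true ∈ A <;> by_cases hf : false ∈ A
  · right; right; right; ext x; cases x <;> simp [ht, hf]
  · right; left; ext x; cases x <;> simp [ht, hf]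
  · right; right; left; ext x; cases x <;> simp [ht, hf]
  · left; ext x; cases x <;> simp [ht, hf]

section GenInt

variable {X : Type} {S : ℝ → ℝ → ℝ} {μ : Set X → ℝ} {f : X → ℝ}

lemma genInt_le {c : ℝ} (h : ∀ t ∈ Icc (0:ℝ) 1, S t (μ {x | t ≤ f x}) ≤ c) :
    genInt S μ f ≤ c :=
  ciSup_le fun t => h t t.2

lemma le_genInt_mul (hμ : Capacity μ) {t : ℝ} (ht : t ∈ Icc (0:ℝ) 1) :
    t * μ {x | t ≤ f x} ≤ genInt (fun t m => t * m) μ f := by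
  have hbdd : BddAbove (range fun s : Icc (0:ℝ) 1 => (s:ℝ) * μ {x | (s:ℝ) ≤ f x}) := by
    refine ⟨1, ?_⟩
    rintro _ ⟨⟨s, hs0, hs1⟩, rfl⟩
    have ⟨hμ0, hμ1⟩ := hμ.1 {x | s ≤ f x}
    exact mul_le_one₀ hs1 hμ0 hμ1
  exact le_ciSup hbdd ⟨t, ht⟩

end GenInt

/-- The level sets of `f` are `univ`, `{true}` and `∅`, so the supremum is attained at
`t = f false` or `t = f true`. -/
lemma genInt_mul_bool_eq_max {μ : Set Bool → ℝ} (hμ : Capacity μ) {f : Bool → ℝ}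
    (h0 : 0 ≤ f false) (hle : f false ≤ f true) (h1 : f true ≤ 1) :
    genInt (fun t m => t * m) μ f = max (f false) (f true * μ {true}) := by
  have ⟨hμ01, hμmono, hμempty, hμuniv⟩ := hμ
  apply le_antisymm
  · refine genInt_le fun t ⟨ht0, ht1⟩ => ?_
    rcases le_or_gt t (f false) with hlow | hlow
    · have hlevel : {x | t ≤ f x} = univ := by
        ext x; cases x <;> simp <;> linarith
      rw [hlevel, hμuniv, mul_one]
      exact le_max_of_le_left hlow
    rcases le_or_gt t (f true) with hmid | hhigh
    · have hlevel : {x | t ≤ f x} = {true} := by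
        ext x; cases x <;> simp <;> linarith
      rw [hlevel]
      exact le_max_of_le_right (mul_le_mul_of_nonneg_right hmid (hμ01 _).1)
    · have hlevel : {x | t ≤ f x} = ∅ := by
        ext x; cases x <;> simp <;> linarith
      rw [hlevel, hμempty, mul_zero]
      exact le_max_of_le_left h0
  · refine max_le ?_ ?_
    · have hlevel : {x | f false ≤ f x} = univ := by
        ext x; cases x <;> simp [hle]
      calc f false = f false * μ {x | f false ≤ f x} := by rw [hlevel, hμuniv, mul_one]
        _ ≤ _ := le_genInt_mul hμ ⟨h0, hle.trans h1⟩
    · have hsub : {true} ⊆ {x | f true ≤ f x} := by simp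
      calc f true * μ {true} ≤ f true * μ {x | f true ≤ f x} :=
            mul_le_mul_of_nonneg_left (hμmono _ _ hsub) (h0.trans hle)
        _ ≤ _ := le_genInt_mul hμ ⟨h0.trans hle, h1⟩

noncomputable def twoPointCapacity (a b : ℝ) : Set Bool → ℝ := fun A => open scoped Classical in
  if A = (∅ : Set Bool) then 0 else if A = {true} then a else if A = {false} then b else 1

lemma twoPointCapacity_apply (a b : ℝ) (A : Set Bool) : open scoped Classical in
    twoPointCapacity a b A =
      if true ∈ A then (if false ∈ A then 1 else a) else (if false ∈ A then b else 0) := by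
  rcases Bool.set_eq_cases A with rfl | rfl | rfl | rfl <;> simp [twoPointCapacity, Set.ext_iff]

lemma capacity_twoPointCapacity {a b : ℝ} (ha : a ∈ Icc (0:ℝ) 1) (hb : b ∈ Icc (0:ℝ) 1) :
    Capacity (twoPointCapacity a b) := by
  refine ⟨fun A => ?_, fun A B hAB => ?_, by simp [twoPointCapacity_apply],
    by simp [twoPointCapacity_apply]⟩
  · rw [twoPointCapacity_apply]
    split_ifs <;> simp_all
  · simp only [twoPointCapacity_apply]
    split_ifs <;> first
      | linarith [ha.1, ha.2, hb.1, hb.2]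
      | exact absurd (hAB ‹true ∈ A›) ‹_›
      | exact absurd (hAB ‹false ∈ A›) ‹_›

theorem stmt11 (β : ℝ) (hβ : β ∈ Icc (0:ℝ) 1) :
    let Pi : ℝ → ℝ → ℝ := fun t m => t * m
    let μ : Set Bool → ℝ := fun A => open scoped Classical in
      if A = (∅ : Set Bool) then 0 else if A = {true} then 0.5
      else if A = {false} then β else 1
    let f : Bool → ℝ := fun x => if x then 1 else 0.4
    let g : Bool → ℝ := fun x => if x then 0.8 else 0.6
    Capacity μ ∧ Comonotone f g ∧
    genInt Pi μ f = 0.5 ∧ genInt Pi μ g = 0.6 ∧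
    genInt Pi μ (fun x => min (f x) (g x)) = 0.4 ∧
    genInt Pi μ (fun x => min (f x) (g x)) < min (genInt Pi μ f) (genInt Pi μ g) := by
  intro Pi μ f g
  have hμ : Capacity μ := capacity_twoPointCapacity (by norm_num) hβ
  have hμtrue : μ {true} = 0.5 := by simp [μ]
  have hf : genInt Pi μ f = 0.5 := by
    rw [genInt_mul_bool_eq_max hμ] <;> norm_num [f, hμtrue]
  have hg : genInt Pi μ g = 0.6 := by
    rw [genInt_mul_bool_eq_max hμ] <;> norm_num [g, hμtrue]
  have hfg : genInt Pi μ (fun x => min (f x) (g x)) = 0.4 := by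
    rw [genInt_mul_bool_eq_max hμ] <;> norm_num [f, g, hμtrue]
  refine ⟨hμ, ?_, hf, hg, hfg, ?_⟩
  · intro x y; cases x <;> cases y <;> norm_num [f, g]
  · rw [hf, hg, hfg]; norm_num
end

section
/- For any semicopula S, any a ∈ (0,1], any capacity μ, and any measurable f : X → [0,1] with f + a ≤ 1, the generalized Sugeno integral satisfies I_S(μ, f + a) = sup_{t ∈ [0, 1−a]} S(t + a, μ({f ≥ t})); in particular I_S(μ, f + a) ≥ a. -/
open Set

namespace Semicopula

variable {S : ℝ → ℝ → ℝ}

lemma bddAbove_range {ι : Type*} (hS : Semicopula S) {u v : ι → ℝ}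
    (hu : ∀ i, u i ∈ Icc (0:ℝ) 1) (hv : ∀ i, v i ∈ Icc (0:ℝ) 1) :
    BddAbove (range fun i => S (u i) (v i)) :=
  ⟨1, by rintro _ ⟨i, rfl⟩; exact (hS.1 _ (hu i) _ (hv i)).2⟩

lemma apply_one (hS : Semicopula S) {x : ℝ} (hx : x ∈ Icc (0:ℝ) 1) : S x 1 = x :=
  (hS.2.2.2 x hx).1

end Semicopula

section ShiftedIntegrand

variable {X : Type} {S : ℝ → ℝ → ℝ} {μ : Set X → ℝ} {f : X → ℝ} {a : ℝ}

lemma Capacity.apply_setOf_le_eq_one (hμ : Capacity μ) (hf : ∀ x, 0 ≤ f x) {t : ℝ}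
    (ht : t ≤ 0) : μ {x | t ≤ f x} = 1 := by
  rw [show {x | t ≤ f x} = univ from eq_univ_of_forall fun x => ht.trans (hf x), hμ.2.2.2]

lemma bddAbove_range_shifted (hS : Semicopula S) (hμ : Capacity μ) (ha : a ∈ Icc (0:ℝ) 1) :
    BddAbove (range fun t : Icc (0:ℝ) (1 - a) => S (t + a) (μ {x | (t:ℝ) ≤ f x})) :=
  hS.bddAbove_range (fun t => ⟨by linarith [t.2.1, ha.1], by linarith [t.2.2]⟩)
    (fun _ => hμ.1 _)

lemma le_iSup_shifted (hS : Semicopula S) (hμ : Capacity μ) (hf : ∀ x, 0 ≤ f x)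
    (ha : a ∈ Icc (0:ℝ) 1) :
    a ≤ ⨆ t : Icc (0:ℝ) (1 - a), S (t + a) (μ {x | (t:ℝ) ≤ f x}) := by
  have h₀ : S ((0:ℝ) + a) (μ {x | (0:ℝ) ≤ f x}) = a := by
    rw [hμ.apply_setOf_le_eq_one hf le_rfl, zero_add, hS.apply_one ha]
  exact h₀.ge.trans <| le_ciSup (bddAbove_range_shifted hS hμ ha)
    (⟨0, le_rfl, by linarith [ha.2]⟩ : Icc (0:ℝ) (1 - a))

/-- Levels `t ≤ a` contribute `S t 1 = t ≤ a`; a level `t > a` of `f + a` is the level `t - a`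
of `f`. -/
lemma genInt_add_const (hS : Semicopula S) (hμ : Capacity μ) (hf : ∀ x, 0 ≤ f x)
    (ha : a ∈ Icc (0:ℝ) 1) :
    genInt S μ (fun x => f x + a) =
      ⨆ t : Icc (0:ℝ) (1 - a), S (t + a) (μ {x | (t:ℝ) ≤ f x}) := by
  have hlevel (t : ℝ) : {x | t ≤ f x + a} = {x | t - a ≤ f x} := by
    ext x; exact (sub_le_iff_le_add : t - a ≤ f x ↔ _).symm
  have hbdd := bddAbove_range_shifted (f := f) hS hμ ha
  rw [genInt]
  apply le_antisymm
  · refine ciSup_le fun ⟨t, ht⟩ => ?_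
    rcases le_or_gt t a with hta | hat
    · calc S t (μ {x | t ≤ f x + a}) = t := by
            rw [hlevel, hμ.apply_setOf_le_eq_one hf (sub_nonpos.2 hta), hS.apply_one ht]
        _ ≤ a := hta
        _ ≤ _ := le_iSup_shifted hS hμ hf ha
    · calc S t (μ {x | t ≤ f x + a}) = S ((t - a) + a) (μ {x | t - a ≤ f x}) := by
            rw [hlevel, sub_add_cancel]
        _ ≤ _ := le_ciSup hbdd ⟨t - a, by linarith, by linarith [ht.2]⟩
  · have : Nonempty (Icc (0:ℝ) (1 - a)) := ⟨⟨0, le_rfl, by linarith [ha.2]⟩⟩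
    refine ciSup_le fun ⟨s, hs⟩ => ?_
    calc S (s + a) (μ {x | s ≤ f x}) = S (s + a) (μ {x | s + a ≤ f x + a}) := by
          rw [hlevel, add_sub_cancel_right]
      _ ≤ _ :=
          le_ciSup (f := fun t : Icc (0:ℝ) 1 => S t (μ {x | (t:ℝ) ≤ f x + a}))
            (hS.bddAbove_range (fun t => t.2) (fun _ => hμ.1 _))
            ⟨s + a, by linarith [hs.1, ha.1], by linarith [hs.2]⟩

end ShiftedIntegrand

theorem stmt13_general {X : Type} (S : ℝ → ℝ → ℝ) (hS : Semicopula S)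
    (μ : Set X → ℝ) (hμ : Capacity μ) (a : ℝ) (ha : a ∈ Ioc (0:ℝ) 1)
    (f : X → ℝ) (hf : ∀ x, f x ∈ Icc (0:ℝ) 1) :
    genInt S μ (fun x => f x + a) =
      (⨆ t : Icc (0:ℝ) (1 - a), S ((t:ℝ) + a) (μ {x | (t:ℝ) ≤ f x})) ∧
    a ≤ genInt S μ (fun x => f x + a) := by
  have hf₀ : ∀ x, 0 ≤ f x := fun x => (hf x).1
  have ha' : a ∈ Icc (0:ℝ) 1 := Ioc_subset_Icc_self ha
  have hshift := genInt_add_const hS hμ hf₀ ha'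
  exact ⟨hshift, hshift ▸ le_iSup_shifted hS hμ hf₀ ha'⟩

theorem stmt13 {X : Type} (S : ℝ → ℝ → ℝ) (hS : Semicopula S)
    (μ : Set X → ℝ) (hμ : Capacity μ) (a : ℝ) (ha : a ∈ Ioc (0:ℝ) 1)
    (f : X → ℝ) (hf : ∀ x, f x ∈ Icc (0:ℝ) 1) (hfa : ∀ x, f x + a ≤ 1) :
    genInt S μ (fun x => f x + a) =
      (⨆ t : Icc (0:ℝ) (1 - a), S ((t:ℝ) + a) (μ {x | (t:ℝ) ≤ f x})) ∧
    a ≤ genInt S μ (fun x => f x + a) :=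
  stmt13_general S hS μ hμ a ha f hf
end
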